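/- arXiv:2504.05929 — 4 statements merged into one kernel-verified Lean document; each statement's English description precedes it below -/
import Mathlib

section
/- Let L be a restricted Lie algebra in characteristic 2, M a restricted L-module, n ≥ 2, and (φ,ω) an n-cochain of the restricted cohomology. Then the pair (d^n_{CE}(φ), δ^n(ω)) is an (n+1)-cochain; in particular δ^n ω(x+y, z_2,...,z_n) = δ^n ω(x, z_2,...,z_n) + δ^n ω(y, z_2,...,z_n) + d^n_{CE} φ(x, y, z_2,...,z_n) for all x,y,z_i in L. -/
/-!
Both sums occurring in the differentials, `∑ₖ g (v k) (v without k)` and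
`∑_{k<l} g ⁅v k, v l⁆ (v without k, l)`, are multilinear as soon as their summands are, and they
are alternating: if two adjacent entries of `v` agree, their transposition pairs the summands into
equal terms, which cancel in characteristic 2; for a multilinear map, vanishing on adjacent equal
entries already implies alternation.

The polarization identity for `δⁿω` is a direct expansion. Peeling `x` and `y` off
`dⁿ_CE φ (x, y, z)` produces exactly the cross terms of `δⁿω (x + y, z)`, except that
`φ (x, y, ⁅z_k, z_l⁆, …)` has to be matched with `φ (⁅z_k, z_l⁆, x, y, …)`: the two arguments
differ by an even permutation.
-/

/-- Reindexing map deleting slot `i`: `v ∘ hdel i` is the tuple `v` with its `i`-th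
entry removed. -/
def hdel (i : ℕ) : ℕ → ℕ := fun k => if k < i then k else k + 1

/-- Prepend an element to a tuple. -/
def hprep {L : Type*} (a : L) (v : ℕ → L) : ℕ → L :=
  fun k => if k = 0 then a else v (k - 1)

/-- Chevalley–Eilenberg differential of an `n`-cochain (characteristic 2, so no signs);
cochains of arity `n` are encoded as functions of sequences depending on slots `< n`. -/
def dCE2 {L M : Type*} [LieRing L] [AddCommGroup M] [LieRingModule L M]
    (n : ℕ) (φ : (ℕ → L) → M) : (ℕ → L) → M :=
  fun v =>
    (∑ i ∈ Finset.range (n + 1), ⁅v i, φ (v ∘ hdel i)⁆) +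
      ∑ i ∈ Finset.range (n + 1), ∑ j ∈ Finset.range (n + 1),
        if i < j then φ (hprep ⁅v i, v j⁆ (v ∘ hdel j ∘ hdel i)) else 0

/-- The restricted differential `δ^n` on the `ω`-part of a restricted `n`-cochain
`(φ, ω)` in characteristic 2; the sequence `z` encodes the variables `z_2, …, z_n`
(so `n - 1` relevant slots). -/
def delta2 {L M : Type*} [LieRing L] [AddCommGroup M] [LieRingModule L M]
    (sq : L → L) (n : ℕ) (φ : (ℕ → L) → M) (ω : L → (ℕ → L) → M) :
    L → (ℕ → L) → M :=
  fun x z =>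
    ⁅x, φ (hprep x z)⁆ +
    (∑ i ∈ Finset.range (n - 1), ⁅z i, ω x (z ∘ hdel i)⁆) +
    φ (hprep (sq x) z) +
    (∑ i ∈ Finset.range (n - 1), φ (hprep ⁅x, z i⁆ (hprep x (z ∘ hdel i)))) +
    ∑ i ∈ Finset.range (n - 1), ∑ j ∈ Finset.range (n - 1),
      if i < j then ω x (hprep ⁅z i, z j⁆ (z ∘ hdel j ∘ hdel i)) else 0

/-- `(φ, ω)` is a restricted `n`-cochain (characteristic 2): `φ` is an alternating
multilinear `n`-cochain, `ω(x, z_2, …, z_{n-1})` is quadratic in `x`, alternating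
multilinear in the `z`'s, and `ω(x+y, z) = ω(x, z) + ω(y, z) + φ(x, y, z)`. -/
def IsRestrictedCochain2 (F : Type*) {L M : Type*} [Field F] [LieRing L] [LieAlgebra F L]
    [AddCommGroup M] [Module F M] [LieRingModule L M]
    (n : ℕ) (φ : (ℕ → L) → M) (ω : L → (ℕ → L) → M) : Prop :=
  (∀ (v : ℕ → L) (i : ℕ) (a b : L), i < n →
      φ (Function.update v i (a + b)) = φ (Function.update v i a) + φ (Function.update v i b)) ∧
  (∀ (v : ℕ → L) (i : ℕ) (c : F) (a : L), i < n →
      φ (Function.update v i (c • a)) = c • φ (Function.update v i a)) ∧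
  (∀ (v : ℕ → L) (i j : ℕ), i < n → j < n → i ≠ j → v i = v j → φ v = 0) ∧
  (∀ (c : F) (x : L) (z : ℕ → L), ω (c • x) z = c ^ 2 • ω x z) ∧
  (∀ (x : L) (z : ℕ → L) (i : ℕ) (a b : L), i < n - 2 →
      ω x (Function.update z i (a + b)) = ω x (Function.update z i a) + ω x (Function.update z i b)) ∧
  (∀ (x : L) (z : ℕ → L) (i : ℕ) (c : F) (a : L), i < n - 2 →
      ω x (Function.update z i (c • a)) = c • ω x (Function.update z i a)) ∧
  (∀ (x : L) (z : ℕ → L) (i j : ℕ), i < n - 2 → j < n - 2 → i ≠ j → z i = z j → ω x z = 0) ∧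
  (∀ (x y : L) (z : ℕ → L), ω (x + y) z = ω x z + ω y z + φ (hprep x (hprep y z)))

open Function

section Index

variable {L : Type*}

lemma comp_hdel_apply_of_ne (v : ℕ → L) {i k : ℕ} (h : i ≠ k) :
    (v ∘ hdel k) (if i < k then i else i - 1) = v i := by
  simp only [comp_apply, hdel]
  split_ifs <;> first | rfl | omega | (congr 1; omega)

lemma comp_hdel_eq_of_apply_eq {v : ℕ → L} {i : ℕ} (h : v i = v (i + 1)) :
    v ∘ hdel i = v ∘ hdel (i + 1) := by
  funext t
  rcases lt_trichotomy t i with ht | rfl | ht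
  · simp [hdel, ht, ht.trans (Nat.lt_succ_self i)]
  · simp [hdel, h]
  · simp [hdel, ht.not_gt, (Nat.succ_le_of_lt ht).not_gt]

lemma update_comp_hdel_self (v : ℕ → L) (i : ℕ) (a : L) :
    update v i a ∘ hdel i = v ∘ hdel i := by
  funext t
  simp only [comp_apply, update_apply, hdel]
  split_ifs <;> first | rfl | omega

lemma update_comp_hdel_of_ne (v : ℕ → L) {i k : ℕ} (a : L) (h : k ≠ i) :
    update v k a ∘ hdel i = update (v ∘ hdel i) (if k < i then k else k - 1) a := by
  funext t
  simp only [comp_apply, update_apply, hdel]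
  split_ifs <;> first | rfl | omega

lemma comp_swap_eq_self {v : ℕ → L} {i j : ℕ} (h : v i = v j) : v ∘ Equiv.swap i j = v := by
  funext t
  simp only [comp_apply, Equiv.swap_apply_def]
  split_ifs with h₁ h₂
  · rw [h₁, h]
  · rw [h₂, h]
  · rfl

lemma comp_hdel_swap {v : ℕ → L} {i : ℕ} (h : v i = v (i + 1)) (k : ℕ) :
    v ∘ hdel (Equiv.swap i (i + 1) k) = v ∘ hdel k := by
  rcases eq_or_ne k i with rfl | hi
  · rw [Equiv.swap_apply_left, comp_hdel_eq_of_apply_eq h]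
  rcases eq_or_ne k (i + 1) with rfl | hi'
  · rw [Equiv.swap_apply_right, comp_hdel_eq_of_apply_eq h]
  · rw [Equiv.swap_apply_of_ne_of_ne hi hi']

lemma comp_hdel_hdel_apply_of_ne (v : ℕ → L) {i k l : ℕ} (hkl : k < l) (hk : i ≠ k)
    (hl : i ≠ l) :
    (v ∘ hdel l ∘ hdel k) (if i < k then i else if i < l then i - 1 else i - 2) = v i := by
  simp only [comp_apply, hdel]
  split_ifs <;> first | rfl | omega | (congr 1; omega)

lemma update_comp_hdel_hdel_left (v : ℕ → L) {k l : ℕ} (a : L) (hkl : k < l) :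
    update v k a ∘ hdel l ∘ hdel k = v ∘ hdel l ∘ hdel k := by
  funext t
  simp only [comp_apply, update_apply, hdel]
  split_ifs <;> first | rfl | omega

lemma update_comp_hdel_hdel_right (v : ℕ → L) (k l : ℕ) (a : L) :
    update v l a ∘ hdel l ∘ hdel k = v ∘ hdel l ∘ hdel k := by
  rw [← comp_assoc, update_comp_hdel_self, comp_assoc]

lemma update_comp_hdel_hdel_of_ne (v : ℕ → L) {k l p : ℕ} (a : L) (hkl : k < l) (hk : p ≠ k)
    (hl : p ≠ l) :
    update v p a ∘ hdel l ∘ hdel k =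
      update (v ∘ hdel l ∘ hdel k) (if p < k then p else if p < l then p - 1 else p - 2) a := by
  funext t
  simp only [comp_apply, update_apply, hdel]
  split_ifs <;> first | rfl | omega

lemma comp_hdel_hdel_swap {v : ℕ → L} {i k l : ℕ} (h : v i = v (i + 1)) (hkl : k < l)
    (hne : ¬(k = i ∧ l = i + 1)) :
    v ∘ hdel (Equiv.swap i (i + 1) l) ∘ hdel (Equiv.swap i (i + 1) k) = v ∘ hdel l ∘ hdel k := by
  funext t
  simp only [comp_apply, hdel, Equiv.swap_apply_def]
  split_ifs <;> first
    | rfl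
    | omega
    | (congr 1; omega)
    | (convert h using 2 <;> omega)
    | (convert h.symm using 2 <;> omega)

lemma hprep_zero (a : L) (v : ℕ → L) : hprep a v 0 = a := rfl

lemma hprep_succ (a : L) (v : ℕ → L) (k : ℕ) : hprep a v (k + 1) = v k := rfl

lemma hprep_update (v : ℕ → L) (a b : L) (k : ℕ) :
    hprep a (update v k b) = update (hprep a v) (k + 1) b := by
  funext t
  simp only [hprep, update_apply]
  split_ifs <;> first | rfl | omega

lemma update_hprep_zero (v : ℕ → L) (a b : L) : update (hprep a v) 0 b = hprep b v := by
  funext t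
  simp only [hprep, update_apply]
  split_ifs <;> rfl

lemma hprep_comp_hdel_zero (v : ℕ → L) (a : L) : hprep a v ∘ hdel 0 = v := by
  funext k
  simp [hprep, hdel]

lemma hprep_comp_hdel_succ (v : ℕ → L) (a : L) (i : ℕ) :
    hprep a v ∘ hdel (i + 1) = hprep a (v ∘ hdel i) := by
  funext k
  rcases k with _ | k
  · rfl
  · simp only [comp_apply, hprep, hdel]
    split_ifs <;> first | rfl | omega

end Index

section AltMultilinear

variable {F L M : Type*} [CommRing F] [AddCommGroup L] [Module F L] [AddCommGroup M] [Module F M]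

variable (F) in
structure IsAltMultilinear (g : (ℕ → L) → M) (N : ℕ) : Prop where
  map_update : ∀ (v : ℕ → L) (i : ℕ), i < N → ∀ (c : F) (a b : L),
    g (update v i (c • a + b)) = c • g (update v i a) + g (update v i b)
  map_eq_zero : ∀ (v : ℕ → L) (i j : ℕ), i < N → j < N → i ≠ j → v i = v j → g v = 0

lemma map_comp_swap_of_map_update_add {g : (ℕ → L) → M} {i j : ℕ} (hij : i ≠ j)
    (hi : ∀ (v : ℕ → L) (a b : L), g (update v i (a + b)) = g (update v i a) + g (update v i b))
    (hj : ∀ (v : ℕ → L) (a b : L), g (update v j (a + b)) = g (update v j a) + g (update v j b))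
    (hzero : ∀ v : ℕ → L, v i = v j → g v = 0) (v : ℕ → L) :
    g (v ∘ Equiv.swap i j) = -g v := by
  have hi' : ∀ c c' d : L, g (update (update v i (c + c')) j d) =
      g (update (update v i c) j d) + g (update (update v i c') j d) := by
    intro c c' d
    rw [update_comm hij, update_comm hij, update_comm hij]
    exact hi _ c c'
  have hdiag : ∀ c : L, g (update (update v i c) j c) = 0 := fun c =>
    hzero _ (by rw [update_self, update_of_ne hij, update_self])
  have h := hdiag (v i + v j)
  rw [hi', hj, hj, hdiag, hdiag, update_eq_self, update_eq_self, ← update_comm hij.symm,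
    ← Equiv.comp_swap_eq_update, zero_add, add_zero] at h
  exact eq_neg_of_add_eq_zero_right h

namespace IsAltMultilinear

variable {g g' : (ℕ → L) → M} {N : ℕ}

lemma map_update_add (hg : IsAltMultilinear F g N) (v : ℕ → L) {i : ℕ} (hi : i < N) (a b : L) :
    g (update v i (a + b)) = g (update v i a) + g (update v i b) := by
  simpa using hg.map_update v i hi 1 a b

lemma map_update_zero (hg : IsAltMultilinear F g N) (v : ℕ → L) {i : ℕ} (hi : i < N) :
    g (update v i 0) = 0 := by
  simpa using hg.map_update_add v hi 0 0

lemma map_update_smul (hg : IsAltMultilinear F g N) (v : ℕ → L) {i : ℕ} (hi : i < N)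
    (c : F) (a : L) : g (update v i (c • a)) = c • g (update v i a) := by
  simpa [hg.map_update_zero v hi] using hg.map_update v i hi c a 0

lemma map_comp_swap (hg : IsAltMultilinear F g N) {i j : ℕ} (hi : i < N) (hj : j < N)
    (hij : i ≠ j) (v : ℕ → L) : g (v ∘ Equiv.swap i j) = -g v :=
  map_comp_swap_of_map_update_add hij (fun w => hg.map_update_add w hi)
    (fun w => hg.map_update_add w hj) (fun w => hg.map_eq_zero w i j hi hj hij) v

lemma of_adjacent
    (hlin : ∀ (v : ℕ → L) (i : ℕ), i < N → ∀ (c : F) (a b : L),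
      g (update v i (c • a + b)) = c • g (update v i a) + g (update v i b))
    (hadj : ∀ (v : ℕ → L) (i : ℕ), i + 1 < N → v i = v (i + 1) → g v = 0) :
    IsAltMultilinear F g N := by
  have hadd : ∀ i, i < N → ∀ (v : ℕ → L) (a b : L),
      g (update v i (a + b)) = g (update v i a) + g (update v i b) := fun i hi v a b => by
    simpa using hlin v i hi 1 a b
  have hfar : ∀ d i (v : ℕ → L), i + d + 1 < N → v i = v (i + d + 1) → g v = 0 := by
    intro d i
    induction d with
    | zero => exact (hadj · i)
    | succ d ih =>
      intro v hN hv
      set j := i + d + 1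
      have hswap := map_comp_swap_of_map_update_add (show j ≠ j + 1 by omega)
        (hadd j (by omega)) (hadd (j + 1) hN) (hadj · j hN) v
      have hw : (v ∘ Equiv.swap j (j + 1)) i = (v ∘ Equiv.swap j (j + 1)) j := by
        simp only [comp_apply, Equiv.swap_apply_left,
          Equiv.swap_apply_of_ne_of_ne (show i ≠ j by omega) (show i ≠ j + 1 by omega)]
        exact hv
      rw [ih _ (by omega) hw] at hswap
      exact neg_eq_zero.mp hswap.symm
  refine ⟨hlin, fun v i j hi hj hij hv => ?_⟩
  rcases hij.lt_or_gt with h | h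
  · exact hfar (j - i - 1) i v (by omega) (by rwa [show i + (j - i - 1) + 1 = j by omega])
  · exact hfar (i - j - 1) j v (by omega) (by rwa [show j + (i - j - 1) + 1 = i by omega, eq_comm])

lemma add (hg : IsAltMultilinear F g N) (hg' : IsAltMultilinear F g' N) :
    IsAltMultilinear F (g + g') N where
  map_update v i hi c a b := by
    simp only [Pi.add_apply, hg.map_update v i hi, hg'.map_update v i hi, smul_add]
    abel
  map_eq_zero v i j hi hj hij hv := by
    simp [hg.map_eq_zero v i j hi hj hij hv, hg'.map_eq_zero v i j hi hj hij hv]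

lemma comp_hprep (hg : IsAltMultilinear F g N) (a : L) :
    IsAltMultilinear F (fun u => g (hprep a u)) (N - 1) where
  map_update v i hi c x y := by
    simp only [hprep_update]
    exact hg.map_update _ (i + 1) (by omega) c x y
  map_eq_zero v i j hi hj hij hv :=
    hg.map_eq_zero _ (i + 1) (j + 1) (by omega) (by omega) (by omega) hv

lemma map_hprep (hg : IsAltMultilinear F g N) (hN : 0 < N) (c : F) (a b : L) (v : ℕ → L) :
    g (hprep (c • a + b) v) = c • g (hprep a v) + g (hprep b v) := by
  simpa only [update_hprep_zero] using hg.map_update (hprep a v) 0 hN c a b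

lemma map_hprep_add (hg : IsAltMultilinear F g N) (hN : 0 < N) (a b : L) (v : ℕ → L) :
    g (hprep (a + b) v) = g (hprep a v) + g (hprep b v) := by
  simpa using hg.map_hprep hN 1 a b v

lemma map_hprep_smul (hg : IsAltMultilinear F g N) (hN : 0 < N) (c : F) (a : L) (v : ℕ → L) :
    g (hprep (c • a) v) = c • g (hprep a v) := by
  simpa only [update_hprep_zero] using hg.map_update_smul (hprep a v) hN c a

lemma map_hprep_rotate (hg : IsAltMultilinear F g N) (hN : 2 < N) (a b c : L) (v : ℕ → L) :
    g (hprep a (hprep b (hprep c v))) = g (hprep c (hprep a (hprep b v))) := by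
  have hrot : hprep c (hprep a (hprep b v)) =
      (hprep a (hprep b (hprep c v)) ∘ Equiv.swap 1 2) ∘ Equiv.swap 0 1 := by
    funext t
    rcases t with _ | _ | _ | t <;> simp [hprep, Equiv.swap_apply_def]
  rw [hrot, hg.map_comp_swap (by omega) (by omega) (by omega),
    hg.map_comp_swap (by omega) hN (by omega), neg_neg]

end IsAltMultilinear

lemma isAltMultilinear_iff {g : (ℕ → L) → M} {N : ℕ} :
    IsAltMultilinear F g N ↔
      (∀ (v : ℕ → L) (i : ℕ) (a b : L), i < N →
        g (update v i (a + b)) = g (update v i a) + g (update v i b)) ∧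
      (∀ (v : ℕ → L) (i : ℕ) (c : F) (a : L), i < N →
        g (update v i (c • a)) = c • g (update v i a)) ∧
      (∀ (v : ℕ → L) (i j : ℕ), i < N → j < N → i ≠ j → v i = v j → g v = 0) :=
  ⟨fun hg => ⟨fun v _ a b hi => hg.map_update_add v hi a b,
      fun v _ c a hi => hg.map_update_smul v hi c a, hg.map_eq_zero⟩,
    fun ⟨hadd, hsmul, halt⟩ => ⟨fun v i hi c a b => by rw [hadd v i _ _ hi, hsmul v i c a hi],
      halt⟩⟩

end AltMultilinear

lemma add_self_eq_zero_of_charTwo (F : Type*) {M : Type*} [CommRing F] [CharP F 2]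
    [AddCommGroup M] [Module F M] (m : M) : m + m = 0 := by
  rw [← two_smul F m, CharTwo.two_eq_zero, zero_smul]

lemma Finset.sum_eq_zero_of_involution_of_charTwo (F : Type*) {ι M : Type*} [CommRing F]
    [CharP F 2] [AddCommGroup M] [Module F M] {s : Finset ι} {f : ι → M} {τ : ι → ι}
    (hτ : Involutive τ) (hs : ∀ a ∈ s, τ a ∈ s) (hf : ∀ a ∈ s, f (τ a) = f a)
    (hfix : ∀ a ∈ s, τ a = a → f a = 0) : ∑ a ∈ s, f a = 0 :=
  Finset.sum_involution (fun a _ => τ a)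
    (fun a ha => by rw [hf a ha, add_self_eq_zero_of_charTwo F])
    (fun a ha hne h => hne (hfix a ha h)) hs (fun a _ => hτ a)

lemma swap_succ_mem_range {i R : ℕ} (hi : i + 1 < R) {k : ℕ} (hk : k ∈ Finset.range R) :
    Equiv.swap i (i + 1) k ∈ Finset.range R := by
  simp only [Finset.mem_range, Equiv.swap_apply_def] at hk ⊢
  split_ifs <;> omega

lemma ne_of_swap_succ_apply_eq {i k : ℕ} (h : Equiv.swap i (i + 1) k = k) :
    k ≠ i ∧ k ≠ i + 1 := by
  simp only [Equiv.swap_apply_def] at h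
  split_ifs at h <;> omega

section DeleteSum

variable {L M : Type*} [AddCommGroup M]

def deleteSum (g : L → (ℕ → L) → M) (R : ℕ) (v : ℕ → L) : M :=
  ∑ k ∈ Finset.range R, g (v k) (v ∘ hdel k)

variable {g g' : L → (ℕ → L) → M}

lemma deleteSum_add (R : ℕ) (v : ℕ → L) :
    deleteSum (fun a u => g a u + g' a u) R v = deleteSum g R v + deleteSum g' R v :=
  Finset.sum_add_distrib

lemma deleteSum_smul {F : Type*} [Monoid F] [DistribMulAction F M] (c : F) (R : ℕ) (v : ℕ → L) :
    deleteSum (fun a u => c • g a u) R v = c • deleteSum g R v :=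
  (Finset.smul_sum ..).symm

lemma deleteSum_hprep (g : L → (ℕ → L) → M) (R : ℕ) (a : L) (v : ℕ → L) :
    deleteSum g (R + 1) (hprep a v) = deleteSum (fun b u => g b (hprep a u)) R v + g a v := by
  simp only [deleteSum, Finset.sum_range_succ', hprep_succ, hprep_zero, hprep_comp_hdel_succ,
    hprep_comp_hdel_zero]

variable {F : Type*} [CommRing F] [AddCommGroup L] [Module F L] [Module F M] {N R : ℕ}

lemma deleteSum_update (hR : R ≤ N + 1)
    (hlin : ∀ (u : ℕ → L) (c : F) (a b : L), g (c • a + b) u = c • g a u + g b u)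
    (hg : ∀ a, IsAltMultilinear F (g a) N) (v : ℕ → L) {p : ℕ} (hp : p < R) (c : F) (a b : L) :
    deleteSum g R (update v p (c • a + b)) =
      c • deleteSum g R (update v p a) + deleteSum g R (update v p b) := by
  simp only [deleteSum, Finset.smul_sum, ← Finset.sum_add_distrib]
  refine Finset.sum_congr rfl fun k hk => ?_
  rcases eq_or_ne k p with rfl | hkp
  · simp only [update_self, update_comp_hdel_self, hlin]
  · simp only [update_of_ne hkp, update_comp_hdel_of_ne _ _ hkp.symm]
    exact (hg _).map_update _ _ (by rw [Finset.mem_range] at hk; split_ifs <;> omega) c a b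

lemma deleteSum_eq_zero_of_adjacent [CharP F 2] (hR : R ≤ N + 1)
    (hg : ∀ a, IsAltMultilinear F (g a) N) {v : ℕ → L} {i : ℕ} (hi : i + 1 < R)
    (hv : v i = v (i + 1)) : deleteSum g R v = 0 := by
  refine Finset.sum_eq_zero_of_involution_of_charTwo F (Equiv.swap_apply_self _ _)
    (fun k => swap_succ_mem_range hi) (fun k _ => ?_) (fun k hk hfix => ?_)
  · rw [comp_hdel_swap hv, ← comp_apply (f := v), comp_swap_eq_self hv]
  · obtain ⟨hki, hki'⟩ := ne_of_swap_succ_apply_eq hfix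
    rw [Finset.mem_range] at hk
    refine (hg _).map_eq_zero _ _ _ ?_ ?_ ?_
      ((comp_hdel_apply_of_ne v hki.symm).trans (hv.trans (comp_hdel_apply_of_ne v ?_).symm))
    all_goals first | omega | (split_ifs <;> omega)

lemma isAltMultilinear_deleteSum [CharP F 2] (hR : R ≤ N + 1)
    (hlin : ∀ (u : ℕ → L) (c : F) (a b : L), g (c • a + b) u = c • g a u + g b u)
    (hg : ∀ a, IsAltMultilinear F (g a) N) : IsAltMultilinear F (deleteSum g R) R :=
  .of_adjacent (fun v _ hp c a b => deleteSum_update hR hlin hg v hp c a b)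
    (fun _ _ hi hv => deleteSum_eq_zero_of_adjacent hR hg hi hv)

end DeleteSum

section BracketSum

variable {L M : Type*} [LieRing L] [AddCommGroup M]

def bracketSum (g : L → (ℕ → L) → M) (R : ℕ) (v : ℕ → L) : M :=
  ∑ k ∈ Finset.range R, ∑ l ∈ Finset.range R,
    if k < l then g ⁅v k, v l⁆ (v ∘ hdel l ∘ hdel k) else 0

variable {g g' : L → (ℕ → L) → M}

lemma bracketSum_add (R : ℕ) (v : ℕ → L) :
    bracketSum (fun a u => g a u + g' a u) R v = bracketSum g R v + bracketSum g' R v := by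
  simp only [bracketSum, ← Finset.sum_add_distrib]
  refine Finset.sum_congr rfl fun k _ => Finset.sum_congr rfl fun l _ => ?_
  split_ifs <;> simp

lemma bracketSum_smul {F : Type*} [Monoid F] [DistribMulAction F M] (c : F) (R : ℕ)
    (v : ℕ → L) : bracketSum (fun a u => c • g a u) R v = c • bracketSum g R v := by
  simp only [bracketSum, Finset.smul_sum, smul_ite, smul_zero]

lemma bracketSum_congr {R : ℕ} (h : 2 ≤ R → ∀ a u, g a u = g' a u) (v : ℕ → L) :
    bracketSum g R v = bracketSum g' R v := by
  refine Finset.sum_congr rfl fun k _ => Finset.sum_congr rfl fun l hl => ?_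
  split_ifs with hkl
  · rw [h (by rw [Finset.mem_range] at hl; omega)]
  · rfl

lemma bracketSum_hprep (g : L → (ℕ → L) → M) (R : ℕ) (a : L) (v : ℕ → L) :
    bracketSum g (R + 1) (hprep a v) =
      deleteSum (fun b u => g ⁅a, b⁆ u) R v + bracketSum (fun b u => g b (hprep a u)) R v := by
  simp only [bracketSum, deleteSum, Finset.sum_range_succ', hprep_succ, hprep_zero,
    ← comp_assoc, hprep_comp_hdel_succ, hprep_comp_hdel_zero, Nat.succ_lt_succ_iff,
    Nat.not_lt_zero, Nat.zero_lt_succ, if_true, if_false, add_zero]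
  rw [add_comm]

variable {F : Type*} [CommRing F] [LieAlgebra F L] [Module F M] {N R : ℕ}

lemma bracketSum_update (hR : R ≤ N + 2)
    (hlin : 2 ≤ R → ∀ (u : ℕ → L) (c : F) (a b : L), g (c • a + b) u = c • g a u + g b u)
    (hg : ∀ a, IsAltMultilinear F (g a) N) (v : ℕ → L) {p : ℕ} (hp : p < R) (c : F) (a b : L) :
    bracketSum g R (update v p (c • a + b)) =
      c • bracketSum g R (update v p a) + bracketSum g R (update v p b) := by
  simp only [bracketSum, Finset.smul_sum, ← Finset.sum_add_distrib]
  refine Finset.sum_congr rfl fun k hk => Finset.sum_congr rfl fun l hl => ?_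
  rw [Finset.mem_range] at hk hl
  split_ifs with hkl
  swap
  · rw [smul_zero, add_zero]
  have hlin' := hlin (by omega)
  rcases eq_or_ne k p with rfl | hkp
  · simp only [update_self, update_of_ne hkl.ne', update_comp_hdel_hdel_left _ _ hkl, add_lie,
      smul_lie, hlin']
  rcases eq_or_ne l p with rfl | hlp
  · simp only [update_self, update_of_ne hkp, update_comp_hdel_hdel_right, lie_add, lie_smul,
      hlin']
  · simp only [update_of_ne hkp, update_of_ne hlp,
      update_comp_hdel_hdel_of_ne _ _ hkl hkp.symm hlp.symm]
    exact (hg _).map_update _ _ (by split_ifs <;> omega) c a b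

lemma bracketSum_eq_zero_of_adjacent [CharP F 2] (hR : R ≤ N + 2) (hzero : ∀ u, g 0 u = 0)
    (hg : ∀ a, IsAltMultilinear F (g a) N) {v : ℕ → L} {i : ℕ} (hi : i + 1 < R)
    (hv : v i = v (i + 1)) : bracketSum g R v = 0 := by
  set σ := Equiv.swap i (i + 1)
  have hvσ : ∀ t, v (σ t) = v t := congrFun (comp_swap_eq_self hv)
  rw [bracketSum, ← Finset.sum_product']
  refine Finset.sum_eq_zero_of_involution_of_charTwo F (τ := Prod.map σ σ)
    (Involutive.prodMap (Equiv.swap_apply_self _ _) (Equiv.swap_apply_self _ _)) ?_ (fun p _ => ?_)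
    (fun p hp hfix => ?_)
  · simp only [Finset.mem_product, Prod.map_fst, Prod.map_snd]
    exact fun p hp => ⟨swap_succ_mem_range hi hp.1, swap_succ_mem_range hi hp.2⟩
  · obtain ⟨k, l⟩ := p
    simp only [Prod.map_fst, Prod.map_snd, hvσ]
    by_cases hpair : (k = i ∧ l = i + 1) ∨ (k = i + 1 ∧ l = i)
    · rcases hpair with ⟨rfl, rfl⟩ | ⟨rfl, rfl⟩ <;> simp [σ, hv, hzero]
    · have hord : σ k < σ l ↔ k < l := by
        simp only [σ, Equiv.swap_apply_def]
        split_ifs <;> omega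
      simp only [hord]
      split_ifs with hkl
      · rw [comp_hdel_hdel_swap hv hkl (by tauto)]
      · rfl
  · obtain ⟨k, l⟩ := p
    simp only [Prod.map, Prod.mk.injEq] at hfix
    obtain ⟨⟨hki, hki'⟩, ⟨hli, hli'⟩⟩ :=
      And.intro (ne_of_swap_succ_apply_eq hfix.1) (ne_of_swap_succ_apply_eq hfix.2)
    simp only [Finset.mem_product, Finset.mem_range] at hp
    dsimp only
    split_ifs with hkl
    · refine (hg _).map_eq_zero _ _ _ ?_ ?_ ?_
        ((comp_hdel_hdel_apply_of_ne v hkl hki.symm hli.symm).trans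
          (hv.trans (comp_hdel_hdel_apply_of_ne v hkl ?_ ?_).symm))
      all_goals first | omega | (split_ifs <;> omega)
    · rfl

lemma isAltMultilinear_bracketSum [CharP F 2] (hR : R ≤ N + 2)
    (hlin : 2 ≤ R → ∀ (u : ℕ → L) (c : F) (a b : L), g (c • a + b) u = c • g a u + g b u)
    (hg : ∀ a, IsAltMultilinear F (g a) N) : IsAltMultilinear F (bracketSum g R) R :=
  .of_adjacent (fun v _ hp c a b => bracketSum_update hR hlin hg v hp c a b)
    (fun _ _ hi hv => bracketSum_eq_zero_of_adjacent hR
      (fun u => by simpa using hlin (by omega) u 1 0 0) hg hi hv)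

end BracketSum

section Cochains

variable {F L M : Type*} [CommRing F] [LieRing L] [LieAlgebra F L] [AddCommGroup M] [Module F M]
  [LieRingModule L M]

lemma dCE2_eq_add (n : ℕ) (φ : (ℕ → L) → M) :
    dCE2 n φ = deleteSum (fun a u => ⁅a, φ u⁆) (n + 1) +
      bracketSum (fun a u => φ (hprep a u)) (n + 1) := rfl

lemma delta2_eq_add (sq : L → L) (n : ℕ) (φ : (ℕ → L) → M) (ω : L → (ℕ → L) → M) (x : L) :
    delta2 sq n φ ω x = (fun z => ⁅x, φ (hprep x z)⁆) + deleteSum (fun a u => ⁅a, ω x u⁆) (n - 1) +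
      (fun z => φ (hprep (sq x) z)) + deleteSum (fun a u => φ (hprep ⁅x, a⁆ (hprep x u))) (n - 1) +
      bracketSum (fun a u => ω x (hprep a u)) (n - 1) := rfl

variable {φ : (ℕ → L) → M} {ω : L → (ℕ → L) → M} {n : ℕ}

lemma delta2_add (sq : L → L) (hsq : ∀ x y : L, sq (x + y) = sq x + sq y + ⁅x, y⁆)
    (hφ : IsAltMultilinear F φ n) (hn : 2 ≤ n)
    (hω : ∀ (x y : L) (z : ℕ → L), ω (x + y) z = ω x z + ω y z + φ (hprep x (hprep y z)))
    (x y : L) (z : ℕ → L) :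
    delta2 sq n φ ω (x + y) z =
      delta2 sq n φ ω x z + delta2 sq n φ ω y z + dCE2 n φ (hprep x (hprep y z)) := by
  obtain ⟨m, rfl⟩ : ∃ m, n = m + 2 := ⟨n - 2, by omega⟩
  have h0 := hφ.map_hprep_add (by omega)
  have h1 : ∀ (b a a' : L) (u : ℕ → L),
      φ (hprep b (hprep (a + a') u)) = φ (hprep b (hprep a u)) + φ (hprep b (hprep a' u)) :=
    fun b => (hφ.comp_hprep b).map_hprep_add (by omega)
  have hrot : bracketSum (fun a u => φ (hprep x (hprep y (hprep a u)))) (m + 1) z =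
      bracketSum (fun a u => φ (hprep a (hprep x (hprep y u)))) (m + 1) z :=
    bracketSum_congr (fun _ a u => hφ.map_hprep_rotate (by omega) x y a u) z
  have hm : m + 2 - 1 = m + 1 := rfl
  simp only [delta2_eq_add, dCE2_eq_add, Pi.add_apply, hm, deleteSum_hprep, bracketSum_hprep,
    hsq, hω, h0, h1, add_lie, lie_add, deleteSum_add, bracketSum_add, hrot]
  abel

variable [LieModule F L M]

lemma IsAltMultilinear.lie_left {g : (ℕ → L) → M} {N : ℕ} (hg : IsAltMultilinear F g N)
    (a : L) : IsAltMultilinear F (fun u => ⁅a, g u⁆) N where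
  map_update v i hi c x y := by simp only [hg.map_update v i hi, lie_add, lie_smul]
  map_eq_zero v i j hi hj hij hv := by simp only [hg.map_eq_zero v i j hi hj hij hv, lie_zero]

lemma IsAltMultilinear.dCE2 [CharP F 2] (hφ : IsAltMultilinear F φ n) (hn : 0 < n) :
    IsAltMultilinear F (dCE2 n φ) (n + 1) := by
  rw [dCE2_eq_add]
  exact (isAltMultilinear_deleteSum le_rfl (fun u c a b => by rw [add_lie, smul_lie])
    hφ.lie_left).add (isAltMultilinear_bracketSum (by omega)
      (fun _ u c a b => hφ.map_hprep hn c a b u) hφ.comp_hprep)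

lemma IsAltMultilinear.delta2 [CharP F 2] (sq : L → L) (hφ : IsAltMultilinear F φ n)
    (hω : ∀ x, IsAltMultilinear F (ω x) (n - 2)) (hn : 2 ≤ n) (x : L) :
    IsAltMultilinear F (delta2 sq n φ ω x) (n - 1) := by
  rw [delta2_eq_add]
  refine ((((hφ.comp_hprep x).lie_left x).add ?_).add (hφ.comp_hprep (sq x))).add ?_ |>.add ?_
  · exact isAltMultilinear_deleteSum (by omega) (fun u c a b => by rw [add_lie, smul_lie])
      (hω x).lie_left
  · exact isAltMultilinear_deleteSum (N := n - 1 - 1) (by omega)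
      (fun u c a b => by rw [lie_add, lie_smul, hφ.map_hprep (by omega)])
      fun a => (hφ.comp_hprep _).comp_hprep x
  · exact isAltMultilinear_bracketSum (N := n - 2 - 1) (by omega)
      (fun _ u c a b => (hω x).map_hprep (by omega) c a b u) (hω x).comp_hprep

lemma delta2_smul (sq : L → L) (hsq : ∀ (c : F) (x : L), sq (c • x) = c ^ 2 • sq x)
    (hφ : IsAltMultilinear F φ n) (hn : 2 ≤ n)
    (hω : ∀ (c : F) (x : L) (z : ℕ → L), ω (c • x) z = c ^ 2 • ω x z)
    (c : F) (x : L) (z : ℕ → L) :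
    delta2 sq n φ ω (c • x) z = c ^ 2 • delta2 sq n φ ω x z := by
  have h0 := hφ.map_hprep_smul (by omega)
  have h1 : ∀ (b : L) (c : F) (a : L) (u : ℕ → L),
      φ (hprep b (hprep (c • a) u)) = c • φ (hprep b (hprep a u)) :=
    fun b => (hφ.comp_hprep b).map_hprep_smul (by omega)
  simp only [delta2_eq_add, Pi.add_apply, hsq, hω, h0, h1, smul_lie, lie_smul, smul_smul,
    deleteSum_smul, bracketSum_smul]
  module

end Cochains

lemma isRestrictedCochain2_iff {F L M : Type*} [Field F] [LieRing L] [LieAlgebra F L]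
    [AddCommGroup M] [Module F M] [LieRingModule L M] {n : ℕ} {φ : (ℕ → L) → M}
    {ω : L → (ℕ → L) → M} :
    IsRestrictedCochain2 F n φ ω ↔
      IsAltMultilinear F φ n ∧ (∀ x, IsAltMultilinear F (ω x) (n - 2)) ∧
        (∀ (c : F) (x : L) (z : ℕ → L), ω (c • x) z = c ^ 2 • ω x z) ∧
        (∀ (x y : L) (z : ℕ → L), ω (x + y) z = ω x z + ω y z + φ (hprep x (hprep y z))) := by
  simp only [IsRestrictedCochain2, isAltMultilinear_iff, forall_and]
  tauto

theorem delta_of_restricted_cochain_general (F L M : Type*) [Field F] [CharP F 2]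
    [LieRing L] [LieAlgebra F L]
    [AddCommGroup M] [Module F M] [LieRingModule L M] [LieModule F L M]
    (sq : L → L)
    (h1 : ∀ (c : F) (x : L), sq (c • x) = c ^ 2 • sq x)
    (h3 : ∀ x y : L, sq (x + y) = sq x + sq y + ⁅x, y⁆)
    (n : ℕ) (hn : 2 ≤ n) (φ : (ℕ → L) → M) (ω : L → (ℕ → L) → M)
    (hc : IsRestrictedCochain2 F n φ ω) :
    IsRestrictedCochain2 F (n + 1) (dCE2 n φ) (delta2 sq n φ ω) ∧
      ∀ (x y : L) (z : ℕ → L),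
        delta2 sq n φ ω (x + y) z =
          delta2 sq n φ ω x z + delta2 sq n φ ω y z + dCE2 n φ (hprep x (hprep y z)) := by
  obtain ⟨hφ, hω, hω_smul, hω_add⟩ := isRestrictedCochain2_iff.1 hc
  have hδ_add := delta2_add sq h3 hφ hn hω_add
  refine ⟨isRestrictedCochain2_iff.2 ⟨hφ.dCE2 (by omega), fun x => ?_,
    delta2_smul sq h1 hφ hn hω_smul, hδ_add⟩, hδ_add⟩
  rw [show n + 1 - 2 = n - 1 by omega]
  exact hφ.delta2 sq hω hn x

/-- If `(φ, ω)` is a restricted `n`-cochain (`n ≥ 2`) of a restricted Lie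
algebra `L` in characteristic 2 with values in a restricted module `M`, then
`(d^n_CE φ, δ^n ω)` is a restricted `(n+1)`-cochain; in particular
`δ^n ω (x+y, z) = δ^n ω (x, z) + δ^n ω (y, z) + d^n_CE φ (x, y, z)`. -/
theorem delta_of_restricted_cochain (F L M : Type*) [Field F] [CharP F 2]
    [LieRing L] [LieAlgebra F L]
    [AddCommGroup M] [Module F M] [LieRingModule L M] [LieModule F L M]
    (sq : L → L)
    (h1 : ∀ (c : F) (x : L), sq (c • x) = c ^ 2 • sq x)
    (h2 : ∀ x y : L, ⁅x, sq y⁆ = ⁅⁅x, y⁆, y⁆)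
    (h3 : ∀ x y : L, sq (x + y) = sq x + sq y + ⁅x, y⁆)
    (hres : ∀ (x : L) (m : M), ⁅sq x, m⁆ = ⁅x, ⁅x, m⁆⁆)
    (n : ℕ) (hn : 2 ≤ n) (φ : (ℕ → L) → M) (ω : L → (ℕ → L) → M)
    (hc : IsRestrictedCochain2 F n φ ω) :
    IsRestrictedCochain2 F (n + 1) (dCE2 n φ) (delta2 sq n φ ω) ∧
      ∀ (x y : L) (z : ℕ → L),
        delta2 sq n φ ω (x + y) z =
          delta2 sq n φ ω x z + delta2 sq n φ ω y z + dCE2 n φ (hprep x (hprep y z)) :=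
  delta_of_restricted_cochain_general F L M sq h1 h3 n hn φ ω hc
end

section
/- Let (h,θ) and (h,θ') be restricted Heisenberg algebras over a field of characteristic p ≥ 3. Then any Lie algebra isomorphism φ : h -> h is given by φ(x) = ax+by+cz, φ(y) = dx+ey+fz, φ(z) = (ae-bd)z with ae-bd ≠ 0; and φ is a restricted isomorphism (h,θ) -> (h,θ') if and only if, setting u = ae-bd, one has θ(x)u = a^p θ'(x) + b^p θ'(y) + c^p θ'(z), θ(y)u = d^p θ'(x) + e^p θ'(y) + f^p θ'(z), and θ(z)u = u^p θ'(z). -/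
/-!
By bilinearity, the bracket of `a x + b y + c z` and `d x + e y + f z` is `(ae - bd) z`; applied
to `φ z = ⁅φ x, φ y⁆` this gives the matrix form of `φ`. Since the `p`-maps take values in `F z`
and `v ↦ v^{[p]}` is `p`-semilinear (Frobenius is additive in characteristic `p`), both sides of
`φ (v^{[p]}) = (φ v)^{[p]}` are `r^p α + s^p β + t^p γ` for `v = r x + s y + t z`, so the identity
holds for all `v` iff it holds on the basis, which is the stated system of equations.
-/

/-- The `p`-map on the 3-dimensional Heisenberg algebra determined by a linear form
`θ`: `(a x + b y + c z)^{[p]} = (a^p θ(x) + b^p θ(y) + c^p θ(z)) z`. -/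
noncomputable def heisPMap {F h : Type*} [Field F] [LieRing h] [LieAlgebra F h]
    (B : Module.Basis (Fin 3) F h) (p : ℕ) (θ : h →ₗ[F] F) : h → h :=
  fun v => (B.repr v 0 ^ p * θ (B 0) + B.repr v 1 ^ p * θ (B 1) + B.repr v 2 ^ p * θ (B 2)) • B 2

namespace Module.Basis

variable {R M : Type*} [Semiring R] [AddCommMonoid M] [Module R M] (B : Basis (Fin 3) R M)

theorem repr_fin_three_smul_add (v : M) :
    B.repr v 0 • B 0 + B.repr v 1 • B 1 + B.repr v 2 • B 2 = v := by
  simpa only [Fin.sum_univ_three] using B.sum_repr v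

theorem exists_eq_fin_three_smul_add (v : M) :
    ∃ r s t : R, v = r • B 0 + s • B 1 + t • B 2 :=
  ⟨_, _, _, (B.repr_fin_three_smul_add v).symm⟩

theorem forall_fin_three_smul_add {P : M → Prop} :
    (∀ v, P v) ↔ ∀ r s t : R, P (r • B 0 + s • B 1 + t • B 2) :=
  ⟨fun hP _ _ _ => hP _, fun hP v => B.repr_fin_three_smul_add v ▸ hP _ _ _⟩

end Module.Basis

theorem forall_pow_mul_add_eq_iff {R : Type*} [Semiring R] {p : ℕ} (hp : p ≠ 0)
    {α β γ α' β' γ' : R} :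
    (∀ r s t : R, r ^ p * α + s ^ p * β + t ^ p * γ = r ^ p * α' + s ^ p * β' + t ^ p * γ') ↔
      α = α' ∧ β = β' ∧ γ = γ' := by
  refine ⟨fun H => ⟨?_, ?_, ?_⟩, fun ⟨hα, hβ, hγ⟩ _ _ _ => by rw [hα, hβ, hγ]⟩
  · simpa [zero_pow hp] using H 1 0 0
  · simpa [zero_pow hp] using H 0 1 0
  · simpa [zero_pow hp] using H 0 0 1

theorem lie_fin_three_smul_add_of_heisenberg {R L : Type*} [CommRing R] [LieRing L]
    [LieAlgebra R L] {x y z : L} (hxy : ⁅x, y⁆ = z) (hxz : ⁅x, z⁆ = 0) (hyz : ⁅y, z⁆ = 0)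
    (a b c d e f : R) :
    ⁅a • x + b • y + c • z, d • x + e • y + f • z⁆ = (a * e - b * d) • z := by
  have hyx : ⁅y, x⁆ = -z := by rw [← lie_skew, hxy]
  have hzx : ⁅z, x⁆ = 0 := by rw [← lie_skew, hxz, neg_zero]
  have hzy : ⁅z, y⁆ = 0 := by rw [← lie_skew, hyz, neg_zero]
  simp only [add_lie, lie_add, smul_lie, lie_smul, hxy, hxz, hyz, hyx, hzx, hzy, lie_self,
    smul_zero, smul_neg, add_zero, smul_smul]
  module

section RestrictedHeisenberg

variable {F h : Type*} [Field F] [LieRing h] [LieAlgebra F h] (B : Module.Basis (Fin 3) F h)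

theorem heisPMap_fin_three_smul_add (p : ℕ) (θ : h →ₗ[F] F) (r s t : F) :
    heisPMap B p θ (r • B 0 + s • B 1 + t • B 2) =
      (r ^ p * θ (B 0) + s ^ p * θ (B 1) + t ^ p * θ (B 2)) • B 2 := by
  simp [heisPMap]

theorem map_heisPMap_eq_heisPMap_map_iff {p : ℕ} [ExpChar F p] (θ θ' : h →ₗ[F] F)
    (φ : h →ₗ[F] h) {a b c d e f : F} (h0 : φ (B 0) = a • B 0 + b • B 1 + c • B 2)
    (h1 : φ (B 1) = d • B 0 + e • B 1 + f • B 2) (h2 : φ (B 2) = (a * e - b * d) • B 2) :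
    (∀ v : h, φ (heisPMap B p θ v) = heisPMap B p θ' (φ v)) ↔
      (θ (B 0) * (a * e - b * d) = a ^ p * θ' (B 0) + b ^ p * θ' (B 1) + c ^ p * θ' (B 2) ∧
       θ (B 1) * (a * e - b * d) = d ^ p * θ' (B 0) + e ^ p * θ' (B 1) + f ^ p * θ' (B 2) ∧
       θ (B 2) * (a * e - b * d) = (a * e - b * d) ^ p * θ' (B 2)) := by
  set u := a * e - b * d
  have hp : p ≠ 0 := (expChar_pos F p).ne'
  rw [B.forall_fin_three_smul_add, ← forall_pow_mul_add_eq_iff hp]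
  refine forall₃_congr fun r s t => ?_
  have hφv : φ (r • B 0 + s • B 1 + t • B 2) =
      (r * a + s * d) • B 0 + (r * b + s * e) • B 1 + (r * c + s * f + t * u) • B 2 := by
    simp only [map_add, map_smul, h0, h1, h2]
    module
  rw [heisPMap_fin_three_smul_add B p, map_smul, h2, smul_smul, hφv,
    heisPMap_fin_three_smul_add B p, (smul_left_injective F (B.ne_zero 2)).eq_iff]
  simp only [add_pow_expChar, mul_pow]
  constructor <;> intro H <;> linear_combination H

end RestrictedHeisenberg

theorem heisenberg_restricted_isomorphism_criterion_general (F h : Type*) (p : ℕ) [Field F]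
    [Fact p.Prime] [CharP F p]
    [LieRing h] [LieAlgebra F h] (B : Module.Basis (Fin 3) F h)
    (hxy : ⁅B 0, B 1⁆ = B 2) (hxz : ⁅B 0, B 2⁆ = 0) (hyz : ⁅B 1, B 2⁆ = 0)
    (θ θ' : h →ₗ[F] F)
    (φ : h ≃ₗ[F] h) (hφ : ∀ u v : h, φ ⁅u, v⁆ = ⁅φ u, φ v⁆) :
    ∃ a b c d e f : F,
      a * e - b * d ≠ 0 ∧
      φ (B 0) = a • B 0 + b • B 1 + c • B 2 ∧
      φ (B 1) = d • B 0 + e • B 1 + f • B 2 ∧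
      φ (B 2) = (a * e - b * d) • B 2 ∧
      ((∀ v : h, φ (heisPMap B p θ v) = heisPMap B p θ' (φ v)) ↔
        (θ (B 0) * (a * e - b * d) = a ^ p * θ' (B 0) + b ^ p * θ' (B 1) + c ^ p * θ' (B 2) ∧
         θ (B 1) * (a * e - b * d) = d ^ p * θ' (B 0) + e ^ p * θ' (B 1) + f ^ p * θ' (B 2) ∧
         θ (B 2) * (a * e - b * d) = (a * e - b * d) ^ p * θ' (B 2))) := by
  obtain ⟨a, b, c, h0⟩ := B.exists_eq_fin_three_smul_add (φ (B 0))
  obtain ⟨d, e, f, h1⟩ := B.exists_eq_fin_three_smul_add (φ (B 1))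
  have h2 : φ (B 2) = (a * e - b * d) • B 2 := by
    rw [← lie_fin_three_smul_add_of_heisenberg hxy hxz hyz, ← h0, ← h1, ← hφ, hxy]
  have hdet : a * e - b * d ≠ 0 := fun hdet0 =>
    B.ne_zero 2 (by rw [← φ.map_eq_zero_iff, h2, hdet0, zero_smul])
  exact ⟨a, b, c, d, e, f, hdet, h0, h1, h2,
    map_heisPMap_eq_heisPMap_map_iff B θ θ' φ.toLinearMap h0 h1 h2⟩

/-- Lie isomorphisms of the Heisenberg algebra (char `p ≥ 3`) have the
matrix form `φ(x) = ax+by+cz`, `φ(y) = dx+ey+fz`, `φ(z) = (ae-bd)z` with `ae-bd ≠ 0`,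
and such a `φ` is a restricted isomorphism `(h,θ) → (h,θ')` iff the stated equations
between `θ`, `θ'` and the coefficients hold. -/
theorem heisenberg_restricted_isomorphism_criterion (F h : Type*) (p : ℕ) [Field F]
    [Fact p.Prime] [CharP F p] (hp3 : 3 ≤ p)
    [LieRing h] [LieAlgebra F h] (B : Module.Basis (Fin 3) F h)
    (hxy : ⁅B 0, B 1⁆ = B 2) (hxz : ⁅B 0, B 2⁆ = 0) (hyz : ⁅B 1, B 2⁆ = 0)
    (θ θ' : h →ₗ[F] F)
    (φ : h ≃ₗ[F] h) (hφ : ∀ u v : h, φ ⁅u, v⁆ = ⁅φ u, φ v⁆) :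
    ∃ a b c d e f : F,
      a * e - b * d ≠ 0 ∧
      φ (B 0) = a • B 0 + b • B 1 + c • B 2 ∧
      φ (B 1) = d • B 0 + e • B 1 + f • B 2 ∧
      φ (B 2) = (a * e - b * d) • B 2 ∧
      ((∀ v : h, φ (heisPMap B p θ v) = heisPMap B p θ' (φ v)) ↔
        (θ (B 0) * (a * e - b * d) = a ^ p * θ' (B 0) + b ^ p * θ' (B 1) + c ^ p * θ' (B 2) ∧
         θ (B 1) * (a * e - b * d) = d ^ p * θ' (B 0) + e ^ p * θ' (B 1) + f ^ p * θ' (B 2) ∧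
         θ (B 2) * (a * e - b * d) = (a * e - b * d) ^ p * θ' (B 2))) :=
  heisenberg_restricted_isomorphism_criterion_general F h p B hxy hxz hyz θ θ' φ hφ
end

section
/- Let L, M be restricted Lie algebras in characteristic 2, φ : L -> M a restricted morphism, and (μ_t, ω_t), (ν_t, ε_t) formal restricted deformations of L and M respectively. If φ_t = Σ_{i≥0} t^i φ_i (with φ_0 = φ) is a restricted morphism from (L[[t]], μ_t, ω_t) to (M[[t]], ν_t, ε_t), then the first-order equation φ(ω_1(x)) + φ_1(x^{[2]_L}) = ε_1(φ(x)) + [φ(x), φ_1(x)]_M holds for all x ∈ L (together with the Lie-part equation φ∘μ_1(x,y) + ν_1(φ(x),φ(y)) + [φ_1(x),φ(y)] + [φ(x),φ_1(y)] + φ_1([x,y]) = 0), i.e. ((μ_1,ω_1),(ν_1,ε_1),φ_1) is a 2-cocycle of the morphism deformation complex. -/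
/-! Both identities are the coefficient of `t¹` in the two defining equations of the morphism
deformation `φ_t`. For the 2-map this is already the claimed identity. For the bracket, the `t¹`
coefficient is `φ(μ₁(x,y)) + φ₁([x,y]) = ν₁(φx,φy) + [φ₁x,φy] + [φx,φ₁y]`, and in characteristic 2
moving the right-hand side across gives the cocycle equation. -/

open Finset

theorem add_self_eq_zero_of_charP_two (R : Type*) {M : Type*} [Semiring R] [CharP R 2]
    [AddCommMonoid M] [Module R M] (a : M) : a + a = 0 := by
  rw [← two_smul R a, CharTwo.two_eq_zero, zero_smul]

section FirstCoefficient

variable {A : Type*} [AddCommMonoid A]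

theorem sum_antidiagonal_one (f : ℕ × ℕ → A) :
    ∑ q ∈ antidiagonal 1, f q = f (0, 1) + f (1, 0) := by
  simp [Nat.antidiagonal_succ]

theorem sum_range_two_ite_two_mul_le_one (f : ℕ → A) :
    (∑ j ∈ range 2, if 2 * j ≤ 1 then f j else 0) = f 0 := by
  simp [sum_range_succ]

theorem sum_range_two_cube_ite_add_eq_one (f : ℕ → ℕ → ℕ → A) :
    (∑ i ∈ range 2, ∑ j ∈ range 2, ∑ k ∈ range 2, if i + j + k = 1 then f i j k else 0) =
      f 0 0 1 + f 0 1 0 + f 1 0 0 := by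
  simp [sum_range_succ, add_comm, add_left_comm]

theorem sum_range_two_cube_ite_add_eq_one_and_lt (f : ℕ → ℕ → ℕ → A) :
    (∑ i ∈ range 2, ∑ j ∈ range 2, ∑ k ∈ range 2,
      if i + j + k = 1 ∧ j < k then f i j k else 0) = f 0 0 1 := by
  simp [sum_range_succ]

end FirstCoefficient

theorem morphism_deformation_infinitesimal_cocycle_char_two_general (F L M : Type*) [Field F]
    [CharP F 2] [LieRing L] [LieAlgebra F L] [LieRing M] [LieAlgebra F M]
    (sqL : L → L)
    -- `φ` is a restricted morphism
    (φ : L →ₗ[F] M)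
    -- a formal restricted deformation `(μ_t, ω_t)` of `L`, coefficientwise
    (μ : ℕ → L → L → L) (w : ℕ → L → L)
    (hμ0 : ∀ x y : L, μ 0 x y = ⁅x, y⁆) (hw0 : ∀ x : L, w 0 x = sqL x)
    -- a formal restricted deformation `(ν_t, ε_t)` of `M`, coefficientwise
    (ν : ℕ → M → M → M) (ε : ℕ → M → M)
    (hν0 : ∀ a b : M, ν 0 a b = ⁅a, b⁆)
    -- a restricted deformation `φ_t = Σ t^i φ_i` of the morphism `φ`
    (φseq : ℕ → (L →ₗ[F] M)) (hφ0 : φseq 0 = φ)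
    -- coefficientwise form of `φ_t ∘ μ_t = ν_t(φ_t, φ_t)`
    (heq1 : ∀ (n : ℕ) (x y : L),
      ∑ q ∈ Finset.HasAntidiagonal.antidiagonal n, φseq q.1 (μ q.2 x y) =
        ∑ i ∈ Finset.range (n + 1), ∑ j ∈ Finset.range (n + 1), ∑ k ∈ Finset.range (n + 1),
          if i + j + k = n then ν k (φseq i x) (φseq j y) else 0)
    -- coefficientwise form of `φ_t ∘ ω_t = ε_t ∘ φ_t`
    (heq2 : ∀ (n : ℕ) (x : L),
      ∑ q ∈ Finset.HasAntidiagonal.antidiagonal n, φseq q.1 (w q.2 x) =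
        (∑ j ∈ Finset.range (n + 1), if 2 * j ≤ n then ε (n - 2 * j) (φseq j x) else 0) +
          ∑ i ∈ Finset.range (n + 1), ∑ j ∈ Finset.range (n + 1), ∑ k ∈ Finset.range (n + 1),
            if i + j + k = n ∧ j < k then ν i (φseq j x) (φseq k x) else 0) :
    (∀ x : L, φ (w 1 x) + φseq 1 (sqL x) = ε 1 (φ x) + ⁅φ x, φseq 1 x⁆) ∧
    (∀ x y : L,
      φ (μ 1 x y) + ν 1 (φ x) (φ y) + ⁅φseq 1 x, φ y⁆ + ⁅φ x, φseq 1 y⁆ + φseq 1 ⁅x, y⁆ = 0) := by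
  constructor
  · intro x
    have h := heq2 1 x
    simp only [Nat.reduceAdd, sum_antidiagonal_one, sum_range_two_ite_two_mul_le_one,
      sum_range_two_cube_ite_add_eq_one_and_lt] at h
    simpa [hφ0, hw0, hν0] using h
  · intro x y
    have h := heq1 1 x y
    simp only [Nat.reduceAdd, sum_antidiagonal_one, sum_range_two_cube_ite_add_eq_one, hφ0, hμ0,
      hν0] at h
    calc φ (μ 1 x y) + ν 1 (φ x) (φ y) + ⁅φseq 1 x, φ y⁆ + ⁅φ x, φseq 1 y⁆ + φseq 1 ⁅x, y⁆
        = (φ (μ 1 x y) + φseq 1 ⁅x, y⁆) + (ν 1 (φ x) (φ y) + ⁅φ x, φseq 1 y⁆ + ⁅φseq 1 x, φ y⁆) := by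
          abel
      _ = 0 := by rw [h, add_self_eq_zero_of_charP_two F]

/-- In characteristic 2, if `φ_t = Σ t^i φ_i` (with `φ_0 = φ`) is a
restricted morphism between formal restricted deformations `(μ_t, ω_t)` of `L` and
`(ν_t, ε_t)` of `M`, then the first-order equations hold:
`φ(ω₁(x)) + φ₁(x^{[2]}) = ε₁(φ(x)) + [φ(x), φ₁(x)]` and
`φ(μ₁(x,y)) + ν₁(φ(x),φ(y)) + [φ₁(x),φ(y)] + [φ(x),φ₁(y)] + φ₁([x,y]) = 0`,
i.e. `((μ₁,ω₁),(ν₁,ε₁),φ₁)` is a 2-cocycle of the morphism deformation complex. -/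
theorem morphism_deformation_infinitesimal_cocycle_char_two (F L M : Type*) [Field F]
    [CharP F 2] [LieRing L] [LieAlgebra F L] [LieRing M] [LieAlgebra F M]
    (sqL : L → L) (sqM : M → M)
    (hL1 : ∀ (c : F) (x : L), sqL (c • x) = c ^ 2 • sqL x)
    (hL2 : ∀ x y : L, ⁅x, sqL y⁆ = ⁅⁅x, y⁆, y⁆)
    (hL3 : ∀ x y : L, sqL (x + y) = sqL x + sqL y + ⁅x, y⁆)
    (hM1 : ∀ (c : F) (a : M), sqM (c • a) = c ^ 2 • sqM a)
    (hM2 : ∀ a b : M, ⁅a, sqM b⁆ = ⁅⁅a, b⁆, b⁆)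
    (hM3 : ∀ a b : M, sqM (a + b) = sqM a + sqM b + ⁅a, b⁆)
    -- `φ` is a restricted morphism
    (φ : L →ₗ[F] M)
    (hφbr : ∀ x y : L, φ ⁅x, y⁆ = ⁅φ x, φ y⁆)
    (hφsq : ∀ x : L, φ (sqL x) = sqM (φ x))
    -- a formal restricted deformation `(μ_t, ω_t)` of `L`, coefficientwise
    (μ : ℕ → L → L → L) (w : ℕ → L → L)
    (hμ0 : ∀ x y : L, μ 0 x y = ⁅x, y⁆) (hw0 : ∀ x : L, w 0 x = sqL x)
    (hμanti : ∀ (i : ℕ) (x y : L), μ i x y = -μ i y x)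
    (hwq : ∀ (i : ℕ) (c : F) (x : L), w i (c • x) = c ^ 2 • w i x)
    (hLjacobi : ∀ (n : ℕ) (x y z : L),
      ∑ q ∈ Finset.HasAntidiagonal.antidiagonal n,
        (μ q.1 x (μ q.2 y z) + μ q.1 y (μ q.2 z x) + μ q.1 z (μ q.2 x y)) = 0)
    (hLcompat : ∀ (n : ℕ) (x y : L),
      ∑ q ∈ Finset.HasAntidiagonal.antidiagonal n, μ q.1 x (w q.2 y) =
        ∑ q ∈ Finset.HasAntidiagonal.antidiagonal n, μ q.1 (μ q.2 x y) y)
    (hLadd : ∀ (n : ℕ) (x y : L), w n (x + y) = w n x + w n y + μ n x y)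
    -- a formal restricted deformation `(ν_t, ε_t)` of `M`, coefficientwise
    (ν : ℕ → M → M → M) (ε : ℕ → M → M)
    (hν0 : ∀ a b : M, ν 0 a b = ⁅a, b⁆) (hε0 : ∀ a : M, ε 0 a = sqM a)
    (hνanti : ∀ (i : ℕ) (a b : M), ν i a b = -ν i b a)
    (hεq : ∀ (i : ℕ) (c : F) (a : M), ε i (c • a) = c ^ 2 • ε i a)
    (hMjacobi : ∀ (n : ℕ) (a b c : M),
      ∑ q ∈ Finset.HasAntidiagonal.antidiagonal n,
        (ν q.1 a (ν q.2 b c) + ν q.1 b (ν q.2 c a) + ν q.1 c (ν q.2 a b)) = 0)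
    (hMcompat : ∀ (n : ℕ) (a b : M),
      ∑ q ∈ Finset.HasAntidiagonal.antidiagonal n, ν q.1 a (ε q.2 b) =
        ∑ q ∈ Finset.HasAntidiagonal.antidiagonal n, ν q.1 (ν q.2 a b) b)
    (hMadd : ∀ (n : ℕ) (a b : M), ε n (a + b) = ε n a + ε n b + ν n a b)
    -- a restricted deformation `φ_t = Σ t^i φ_i` of the morphism `φ`
    (φseq : ℕ → (L →ₗ[F] M)) (hφ0 : φseq 0 = φ)
    -- coefficientwise form of `φ_t ∘ μ_t = ν_t(φ_t, φ_t)`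
    (heq1 : ∀ (n : ℕ) (x y : L),
      ∑ q ∈ Finset.HasAntidiagonal.antidiagonal n, φseq q.1 (μ q.2 x y) =
        ∑ i ∈ Finset.range (n + 1), ∑ j ∈ Finset.range (n + 1), ∑ k ∈ Finset.range (n + 1),
          if i + j + k = n then ν k (φseq i x) (φseq j y) else 0)
    -- coefficientwise form of `φ_t ∘ ω_t = ε_t ∘ φ_t`
    (heq2 : ∀ (n : ℕ) (x : L),
      ∑ q ∈ Finset.HasAntidiagonal.antidiagonal n, φseq q.1 (w q.2 x) =
        (∑ j ∈ Finset.range (n + 1), if 2 * j ≤ n then ε (n - 2 * j) (φseq j x) else 0) +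
          ∑ i ∈ Finset.range (n + 1), ∑ j ∈ Finset.range (n + 1), ∑ k ∈ Finset.range (n + 1),
            if i + j + k = n ∧ j < k then ν i (φseq j x) (φseq k x) else 0) :
    (∀ x : L, φ (w 1 x) + φseq 1 (sqL x) = ε 1 (φ x) + ⁅φ x, φseq 1 x⁆) ∧
    (∀ x y : L,
      φ (μ 1 x y) + ν 1 (φ x) (φ y) + ⁅φseq 1 x, φ y⁆ + ⁅φ x, φseq 1 y⁆ + φseq 1 ⁅x, y⁆ = 0) :=
  morphism_deformation_infinitesimal_cocycle_char_two_general F L M sqL φ μ w hμ0 hw0 ν ε hν0 φseq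
    hφ0 heq1 heq2
end

section
/- Let L be a restricted Lie algebra in characteristic 2 and (m_t, ω_t) a formal restricted deformation of L. Then its infinitesimal (m_1, ω_1) is a restricted 2-cocycle: m_1 satisfies the Chevalley–Eilenberg 2-cocycle identity, ω_1(λx) = λ^2 ω_1(x), ω_1(x+y) = ω_1(x)+ω_1(y)+m_1(x,y), and m_1(x, y^{[2]}) + [x, ω_1(y)] + [m_1(x,y), y] + m_1([x,y], y) = 0 for all x,y ∈ L. -/
/-! The equations of a formal restricted deformation hold coefficientwise in `t`; the `t¹`
coefficients of the Jacobi identity and of `m_t(x, ω_t(y)) = m_t(m_t(x,y), y)` are exactly the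
cocycle identities, once `m₀` and `ω₀` are replaced by the bracket and the `2`-map. In
characteristic `2` the sign of the restricted identity is irrelevant. -/

theorem Finset.Nat.sum_antidiagonal_one {M : Type*} [AddCommMonoid M] (f : ℕ × ℕ → M) :
    ∑ p ∈ Finset.HasAntidiagonal.antidiagonal (1 : ℕ), f p = f (0, 1) + f (1, 0) :=
  Finset.sum_pair (by decide : ((0, 1) : ℕ × ℕ) ≠ (1, 0))

theorem CharTwo.add_eq_zero_of_eq (R : Type*) {M : Type*} [Semiring R] [CharP R 2]
    [AddCommMonoid M] [Module R M] {a b : M} (h : a = b) : a + b = 0 := by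
  rw [h, ← two_smul R b, CharTwo.two_eq_zero, zero_smul]

theorem lie_two_cocycle_of_jacobi_coeff_one {L : Type*} [LieRing L] (m : ℕ → L → L → L)
    (hm0 : ∀ x y : L, m 0 x y = ⁅x, y⁆)
    (hjacobi : ∀ x y z : L, ∑ q ∈ Finset.HasAntidiagonal.antidiagonal 1,
      (m q.1 x (m q.2 y z) + m q.1 y (m q.2 z x) + m q.1 z (m q.2 x y)) = 0)
    (x y z : L) :
    ⁅x, m 1 y z⁆ + ⁅y, m 1 z x⁆ + ⁅z, m 1 x y⁆ + m 1 x ⁅y, z⁆ + m 1 y ⁅z, x⁆ + m 1 z ⁅x, y⁆ = 0 := by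
  have h := hjacobi x y z
  simp only [Finset.Nat.sum_antidiagonal_one, hm0] at h
  rw [← h]
  abel

theorem restricted_two_cocycle_of_compat_coeff_one (F : Type*) {L : Type*} [Semiring F]
    [CharP F 2] [LieRing L] [Module F L] (sq : L → L) (m : ℕ → L → L → L) (w : ℕ → L → L)
    (hm0 : ∀ x y : L, m 0 x y = ⁅x, y⁆) (hw0 : ∀ x : L, w 0 x = sq x)
    (hcompat : ∀ x y : L, ∑ q ∈ Finset.HasAntidiagonal.antidiagonal 1, m q.1 x (w q.2 y) =
      ∑ q ∈ Finset.HasAntidiagonal.antidiagonal 1, m q.1 (m q.2 x y) y)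
    (x y : L) :
    m 1 x (sq y) + ⁅x, w 1 y⁆ + ⁅m 1 x y, y⁆ + m 1 ⁅x, y⁆ y = 0 := by
  have h := hcompat x y
  simp only [Finset.Nat.sum_antidiagonal_one, hm0, hw0] at h
  rw [show m 1 x (sq y) + ⁅x, w 1 y⁆ + ⁅m 1 x y, y⁆ + m 1 ⁅x, y⁆ y
      = (⁅x, w 1 y⁆ + m 1 x (sq y)) + (⁅m 1 x y, y⁆ + m 1 ⁅x, y⁆ y) by abel]
  exact CharTwo.add_eq_zero_of_eq F h

theorem infinitesimal_is_restricted_two_cocycle_char_two_general (F L : Type*) [Field F]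
    [CharP F 2] [LieRing L] [LieAlgebra F L]
    (sq : L → L)
    -- the coefficients of the deformation
    (m : ℕ → L → L → L) (w : ℕ → L → L)
    (hm0 : ∀ x y : L, m 0 x y = ⁅x, y⁆)
    (hw0 : ∀ x : L, w 0 x = sq x)
    -- each `m_i` is bilinear and antisymmetric, each `ω_i` is quadratic-homogeneous
    (hwq : ∀ (i : ℕ) (c : F) (x : L), w i (c • x) = c ^ 2 • w i x)
    -- the deformation equations, coefficientwise in `t`
    (hjacobi : ∀ (n : ℕ) (x y z : L),
      ∑ q ∈ Finset.HasAntidiagonal.antidiagonal n,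
        (m q.1 x (m q.2 y z) + m q.1 y (m q.2 z x) + m q.1 z (m q.2 x y)) = 0)
    (hcompat : ∀ (n : ℕ) (x y : L),
      ∑ q ∈ Finset.HasAntidiagonal.antidiagonal n, m q.1 x (w q.2 y) =
        ∑ q ∈ Finset.HasAntidiagonal.antidiagonal n, m q.1 (m q.2 x y) y)
    (haddeq : ∀ (n : ℕ) (x y : L), w n (x + y) = w n x + w n y + m n x y) :
    (∀ x y z : L,
      ⁅x, m 1 y z⁆ + ⁅y, m 1 z x⁆ + ⁅z, m 1 x y⁆ +
        m 1 x ⁅y, z⁆ + m 1 y ⁅z, x⁆ + m 1 z ⁅x, y⁆ = 0) ∧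
    (∀ (c : F) (x : L), w 1 (c • x) = c ^ 2 • w 1 x) ∧
    (∀ x y : L, w 1 (x + y) = w 1 x + w 1 y + m 1 x y) ∧
    (∀ x y : L, m 1 x (sq y) + ⁅x, w 1 y⁆ + ⁅m 1 x y, y⁆ + m 1 ⁅x, y⁆ y = 0) := by
  refine ⟨lie_two_cocycle_of_jacobi_coeff_one m hm0 (hjacobi 1), hwq 1, haddeq 1,
    restricted_two_cocycle_of_compat_coeff_one F sq m w hm0 hw0 (hcompat 1)⟩

/-- In characteristic 2, the infinitesimal `(m₁, ω₁)` of a formal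
restricted deformation `(m_t, ω_t)` of a restricted Lie algebra is a restricted
2-cocycle: `m₁` satisfies the Chevalley–Eilenberg 2-cocycle identity,
`ω₁(λx) = λ²ω₁(x)`, `ω₁(x+y) = ω₁(x)+ω₁(y)+m₁(x,y)`, and
`m₁(x, y^{[2]}) + [x, ω₁(y)] + [m₁(x,y), y] + m₁([x,y], y) = 0`. -/
theorem infinitesimal_is_restricted_two_cocycle_char_two (F L : Type*) [Field F]
    [CharP F 2] [LieRing L] [LieAlgebra F L]
    (sq : L → L)
    (h1 : ∀ (c : F) (x : L), sq (c • x) = c ^ 2 • sq x)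
    (h2 : ∀ x y : L, ⁅x, sq y⁆ = ⁅⁅x, y⁆, y⁆)
    (h3 : ∀ x y : L, sq (x + y) = sq x + sq y + ⁅x, y⁆)
    -- the coefficients of the deformation
    (m : ℕ → L → L → L) (w : ℕ → L → L)
    (hm0 : ∀ x y : L, m 0 x y = ⁅x, y⁆)
    (hw0 : ∀ x : L, w 0 x = sq x)
    -- each `m_i` is bilinear and antisymmetric, each `ω_i` is quadratic-homogeneous
    (hmadd₁ : ∀ (i : ℕ) (x x' y : L), m i (x + x') y = m i x y + m i x' y)
    (hmsmul₁ : ∀ (i : ℕ) (c : F) (x y : L), m i (c • x) y = c • m i x y)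
    (hmadd₂ : ∀ (i : ℕ) (x y y' : L), m i x (y + y') = m i x y + m i x y')
    (hmsmul₂ : ∀ (i : ℕ) (c : F) (x y : L), m i x (c • y) = c • m i x y)
    (hmanti : ∀ (i : ℕ) (x y : L), m i x y = -m i y x)
    (hwq : ∀ (i : ℕ) (c : F) (x : L), w i (c • x) = c ^ 2 • w i x)
    -- the deformation equations, coefficientwise in `t`
    (hjacobi : ∀ (n : ℕ) (x y z : L),
      ∑ q ∈ Finset.HasAntidiagonal.antidiagonal n,
        (m q.1 x (m q.2 y z) + m q.1 y (m q.2 z x) + m q.1 z (m q.2 x y)) = 0)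
    (hcompat : ∀ (n : ℕ) (x y : L),
      ∑ q ∈ Finset.HasAntidiagonal.antidiagonal n, m q.1 x (w q.2 y) =
        ∑ q ∈ Finset.HasAntidiagonal.antidiagonal n, m q.1 (m q.2 x y) y)
    (haddeq : ∀ (n : ℕ) (x y : L), w n (x + y) = w n x + w n y + m n x y) :
    (∀ x y z : L,
      ⁅x, m 1 y z⁆ + ⁅y, m 1 z x⁆ + ⁅z, m 1 x y⁆ +
        m 1 x ⁅y, z⁆ + m 1 y ⁅z, x⁆ + m 1 z ⁅x, y⁆ = 0) ∧
    (∀ (c : F) (x : L), w 1 (c • x) = c ^ 2 • w 1 x) ∧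
    (∀ x y : L, w 1 (x + y) = w 1 x + w 1 y + m 1 x y) ∧
    (∀ x y : L, m 1 x (sq y) + ⁅x, w 1 y⁆ + ⁅m 1 x y, y⁆ + m 1 ⁅x, y⁆ y = 0) :=
  infinitesimal_is_restricted_two_cocycle_char_two_general F L sq m w hm0 hw0 hwq hjacobi hcompat
    haddeq
end
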